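/- Let Ω ⊆ ℝ^p be open and convex, F : Ω → ℝ^p and H : Ω → ℝ be smooth (C²) functions. If there exists a smooth G : Ω → ℝ such that for all V ∈ Ω, (∂_V H)(V) · (∂_V F)(V) = (∂_V G)(V) (i.e., the row vector of partial derivatives of H composed with the Jacobian of F equals the gradient of G), then the matrix (∂²_V H)(V) × (∂_V F)(V), i.e., the product of the Hessian of H with the Jacobian of F, is symmetric at every V ∈ Ω. -/

import Mathlib

noncomputable def pd {p : ℕ} (f : (Fin p → ℝ) → ℝ) (V : Fin p → ℝ) (i : Fin p) : ℝ :=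
  fderiv ℝ f V (Pi.single i 1)

noncomputable def grad {p : ℕ} (H : (Fin p → ℝ) → ℝ) (V : Fin p → ℝ) : Fin p → ℝ :=
  fun i => pd H V i

noncomputable def jac {p : ℕ} (F : (Fin p → ℝ) → (Fin p → ℝ)) (V : Fin p → ℝ) :
    Matrix (Fin p) (Fin p) ℝ :=
  Matrix.of fun i j => pd (fun W => F W i) V j

noncomputable def hess {p : ℕ} (H : (Fin p → ℝ) → ℝ) (V : Fin p → ℝ) :
    Matrix (Fin p) (Fin p) ℝ :=
  Matrix.of fun i j => pd (fun W => pd H W i) V j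

/-! Differentiating `grad H ᵥ* jac F = grad G` gives `(jac F)ᵀ * hess H = hess G - ∑ₖ ∂ₖH • hess Fₖ`.
The right-hand side is symmetric by Schwarz's theorem, and so is `hess H`; hence
`hess H * jac F = ((jac F)ᵀ * hess H)ᵀ` is symmetric. -/

open Filter Topology Matrix

section Partials

variable {p : ℕ} {f g : (Fin p → ℝ) → ℝ} {V : Fin p → ℝ}

lemma pd_congr_of_eventuallyEq (h : f =ᶠ[𝓝 V] g) (i : Fin p) : pd f V i = pd g V i := by
  rw [pd, pd, h.fderiv_eq]

lemma pd_mul (hf : DifferentiableAt ℝ f V) (hg : DifferentiableAt ℝ g V) (i : Fin p) :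
    pd (fun W => f W * g W) V i = pd f V i * g V + f V * pd g V i := by
  simp only [pd, fderiv_fun_mul hf hg, _root_.add_apply,
    _root_.smul_apply, smul_eq_mul]
  ring

lemma pd_sum {ι : Type*} {s : Finset ι} {f : ι → (Fin p → ℝ) → ℝ}
    (hf : ∀ k ∈ s, DifferentiableAt ℝ (f k) V) (i : Fin p) :
    pd (fun W => ∑ k ∈ s, f k W) V i = ∑ k ∈ s, pd (f k) V i := by
  simp only [pd, fderiv_fun_sum hf, _root_.sum_apply]

lemma differentiableAt_fderiv_of_contDiffAt (hf : ContDiffAt ℝ 2 f V) :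
    DifferentiableAt ℝ (fderiv ℝ f) V :=
  (hf.fderiv_right (m := 1) (by norm_num)).differentiableAt one_ne_zero

lemma differentiableAt_pd (hf : ContDiffAt ℝ 2 f V) (i : Fin p) :
    DifferentiableAt ℝ (fun W => pd f W i) V :=
  (differentiableAt_fderiv_of_contDiffAt hf).clm_apply (differentiableAt_const _)

lemma hess_apply_eq_fderiv_fderiv (hf : ContDiffAt ℝ 2 f V) (i j : Fin p) :
    hess f V i j = fderiv ℝ (fderiv ℝ f) V (Pi.single j 1) (Pi.single i 1) := by
  change fderiv ℝ (fun W => fderiv ℝ f W (Pi.single i 1)) V (Pi.single j 1) = _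
  rw [fderiv_clm_apply (differentiableAt_fderiv_of_contDiffAt hf) (differentiableAt_const _)]
  simp

lemma hess_isSymm (hf : ContDiffAt ℝ 2 f V) : (hess f V).IsSymm :=
  IsSymm.ext fun i j => by
    rw [hess_apply_eq_fderiv_fderiv hf, hess_apply_eq_fderiv_fderiv hf,
      hf.isSymmSndFDerivAt (by simp)]

end Partials

lemma jac_transpose_mul_hess_add_sum_eq_hess {p : ℕ} {F : (Fin p → ℝ) → (Fin p → ℝ)}
    {H G : (Fin p → ℝ) → ℝ} {V : Fin p → ℝ} (hF : ContDiffAt ℝ 2 F V) (hH : ContDiffAt ℝ 2 H V)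
    (hcompat : ∀ᶠ W in 𝓝 V, vecMul (grad H W) (jac F W) = grad G W) :
    (jac F V)ᵀ * hess H V + ∑ k, grad H V k • hess (fun W => F W k) V = hess G V := by
  have hFk := contDiffAt_pi.mp hF
  ext i j
  have hGi : (fun W => ∑ k, pd H W k * pd (fun W' => F W' k) W i) =ᶠ[𝓝 V] fun W => pd G W i :=
    hcompat.mono fun W hW => congrFun hW i
  change _ = pd (fun W => pd G W i) V j
  rw [← pd_congr_of_eventuallyEq hGi,
    pd_sum (f := fun k W => pd H W k * pd (fun W' => F W' k) W i)
      fun k _ => (differentiableAt_pd hH k).mul (differentiableAt_pd (hFk k) i)]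
  simp only [pd_mul (differentiableAt_pd hH _) (differentiableAt_pd (hFk _) i),
    Finset.sum_add_distrib, Matrix.add_apply, mul_apply, Matrix.sum_apply, Matrix.smul_apply,
    smul_eq_mul, transpose_apply, jac, hess, grad, of_apply]
  congr 1
  exact Finset.sum_congr rfl fun k _ => mul_comm _ _

theorem stmt0_general (p : ℕ) (Ω : Set (Fin p → ℝ)) (hΩo : IsOpen Ω)
    (F : (Fin p → ℝ) → (Fin p → ℝ)) (H : (Fin p → ℝ) → ℝ)
    (hF : ContDiffOn ℝ 2 F Ω) (hH : ContDiffOn ℝ 2 H Ω)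
    (hcompat : ∃ G : (Fin p → ℝ) → ℝ, ContDiffOn ℝ 2 G Ω ∧
      ∀ V ∈ Ω, Matrix.vecMul (grad H V) (jac F V) = grad G V) :
    ∀ V ∈ Ω, (hess H V * jac F V).IsSymm := by
  obtain ⟨G, hG, hGHF⟩ := hcompat
  intro V hV
  have hΩ : Ω ∈ 𝓝 V := hΩo.mem_nhds hV
  have hHV := hH.contDiffAt hΩ
  have hFk := contDiffAt_pi.mp (hF.contDiffAt hΩ)
  have hdiff := jac_transpose_mul_hess_add_sum_eq_hess (hF.contDiffAt hΩ) hHV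
    (eventually_of_mem hΩ hGHF)
  have hsum : (∑ k, grad H V k • hess (fun W => F W k) V).IsSymm :=
    Finset.sum_induction _ IsSymm (fun _ _ => IsSymm.add) isSymm_zero
      fun k _ => (hess_isSymm (hFk k)).smul _
  have hsymm : ((jac F V)ᵀ * hess H V).IsSymm := by
    rw [eq_sub_of_add_eq hdiff]
    exact (hess_isSymm (hG.contDiffAt hΩ)).sub hsum
  rwa [← (hess_isSymm hHV).eq, ← transpose_transpose (jac F V), ← transpose_mul,
    isSymm_transpose_iff]

theorem stmt0 (p : ℕ) (Ω : Set (Fin p → ℝ)) (hΩo : IsOpen Ω) (hΩc : Convex ℝ Ω)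
    (F : (Fin p → ℝ) → (Fin p → ℝ)) (H : (Fin p → ℝ) → ℝ)
    (hF : ContDiffOn ℝ 2 F Ω) (hH : ContDiffOn ℝ 2 H Ω)
    (hcompat : ∃ G : (Fin p → ℝ) → ℝ, ContDiffOn ℝ 2 G Ω ∧
      ∀ V ∈ Ω, Matrix.vecMul (grad H V) (jac F V) = grad G V) :
    ∀ V ∈ Ω, (hess H V * jac F V).IsSymm :=
  stmt0_general p Ω hΩo F H hF hH hcompat
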